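/- arXiv:2011.13835 — 3 statements merged into one kernel-verified Lean document; each statement's English description precedes it below -/
import Mathlib

section
/- The broadside channel gain g(B) = (1/(2π)) · ( B/(3(B+1)√(2B+1)) + (2/3)·arctan(B/√(2B+1)) ) is strictly increasing in B for B > 0. -/
/-! Differentiate. With `s = √(2B + 1)` one has `s² + B² = (B + 1)²` and `s² - B = B + 1`,
which makes both derivatives collapse; their combination is
`(3B² + 7B + 3) / (3 (B + 1)² (2B + 1)^{3/2})`, positive as soon as `2B + 1 > 0`, so `g`
increases on `(-1/2, ∞)`. -/

open Real

noncomputable def g (B : ℝ) : ℝ :=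
  (1 / (2 * π)) * (B / (3 * (B + 1) * Real.sqrt (2 * B + 1)) +
    (2 / 3) * Real.arctan (B / Real.sqrt (2 * B + 1)))

lemma hasDerivAt_sqrt_two_mul_add_one {x : ℝ} (hx : 0 < 2 * x + 1) :
    HasDerivAt (fun B : ℝ => Real.sqrt (2 * B + 1)) (1 / Real.sqrt (2 * x + 1)) x := by
  have hlin : HasDerivAt (fun B : ℝ => 2 * B + 1) 2 x := by
    simpa using ((hasDerivAt_id x).const_mul 2).add_const 1
  convert hlin.sqrt hx.ne' using 1
  field_simp

lemma hasDerivAt_arctan_div_sqrt {x : ℝ} (hx : 0 < 2 * x + 1) :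
    HasDerivAt (fun B : ℝ => Real.arctan (B / Real.sqrt (2 * B + 1)))
      (1 / ((x + 1) * Real.sqrt (2 * x + 1))) x := by
  have hs : 0 < Real.sqrt (2 * x + 1) := Real.sqrt_pos.mpr hx
  refine ((hasDerivAt_id' x).div (hasDerivAt_sqrt_two_mul_add_one hx) hs.ne').arctan.congr_deriv ?_
  simp only [Pi.div_apply]
  have hs2 := Real.sq_sqrt hx.le
  generalize Real.sqrt (2 * x + 1) = s at hs hs2 ⊢
  have hx1 : 0 < x + 1 := by linarith
  field_simp
  linear_combination x * hs2

lemma hasDerivAt_div_mul_sqrt {x : ℝ} (hx : 0 < 2 * x + 1) :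
    HasDerivAt (fun B : ℝ => B / (3 * (B + 1) * Real.sqrt (2 * B + 1)))
      ((1 + x - x ^ 2) / (3 * (x + 1) ^ 2 * (2 * x + 1) * Real.sqrt (2 * x + 1))) x := by
  have hs : 0 < Real.sqrt (2 * x + 1) := Real.sqrt_pos.mpr hx
  have hx1 : 0 < x + 1 := by linarith
  have hden : HasDerivAt (fun B : ℝ => 3 * (B + 1) * Real.sqrt (2 * B + 1))
      (3 * Real.sqrt (2 * x + 1) + 3 * (x + 1) * (1 / Real.sqrt (2 * x + 1))) x := by
    refine ((((hasDerivAt_id' x).add_const 1).const_mul 3).mul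
      (hasDerivAt_sqrt_two_mul_add_one hx)).congr_deriv ?_
    ring
  refine ((hasDerivAt_id' x).div hden (by positivity)).congr_deriv ?_
  have hs2 := Real.sq_sqrt hx.le
  generalize Real.sqrt (2 * x + 1) = s at hs hs2 ⊢
  rw [← hs2]
  field_simp
  linear_combination hs2

lemma hasDerivAt_g {x : ℝ} (hx : 0 < 2 * x + 1) :
    HasDerivAt g ((1 / (2 * π)) * ((3 * x ^ 2 + 7 * x + 3) /
      (3 * (x + 1) ^ 2 * (2 * x + 1) * Real.sqrt (2 * x + 1)))) x := by
  have hs : 0 < Real.sqrt (2 * x + 1) := Real.sqrt_pos.mpr hx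
  have hx1 : 0 < x + 1 := by linarith
  refine (((hasDerivAt_div_mul_sqrt hx).add
    ((hasDerivAt_arctan_div_sqrt hx).const_mul (2 / 3))).const_mul (1 / (2 * π))).congr_deriv ?_
  field_simp
  ring

lemma strictMonoOn_g : StrictMonoOn g (Set.Ioi (-1 / 2)) := by
  have h2x_pos : ∀ x ∈ Set.Ioi (-1 / 2 : ℝ), 0 < 2 * x + 1 := fun x hx => by
    rw [Set.mem_Ioi] at hx; linarith
  refine strictMonoOn_of_hasDerivWithinAt_pos (convex_Ioi _)
    (fun x hx => (hasDerivAt_g (h2x_pos x hx)).continuousAt.continuousWithinAt)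
    (fun x hx => (hasDerivAt_g (h2x_pos x (interior_subset hx))).hasDerivWithinAt)
    (fun x hx => ?_)
  rw [interior_Ioi] at hx
  have h2x := h2x_pos x hx
  have hnum : 0 < 3 * x ^ 2 + 7 * x + 3 := by nlinarith
  have hx1 : 0 < x + 1 := by linarith
  have hs : 0 < Real.sqrt (2 * x + 1) := Real.sqrt_pos.mpr h2x
  have hπ := pi_pos
  positivity

theorem broadside_gain_strictMono : StrictMonoOn g (Set.Ioi (0 : ℝ)) :=
  strictMonoOn_g.mono (Set.Ioi_subset_Ioi (by norm_num))
end

section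
/- For all B > 0, the broadside channel gain satisfies 0 < g(B) < 1/3, where g(B) = (1/(2π)) · ( B/(3(B+1)√(2B+1)) + (2/3)·arctan(B/√(2B+1)) ). -/
open Real

theorem broadside_gain_bounds (B : ℝ) (hB : 0 < B) : 0 < g B ∧ g B < 1 / 3 := by
  have hs : 0 < Real.sqrt (2 * B + 1) := Real.sqrt_pos.mpr (by linarith)
  have hs1 : 1 ≤ Real.sqrt (2 * B + 1) := by
    have := Real.sqrt_le_sqrt (show (1:ℝ) ≤ 2 * B + 1 by linarith)
    rwa [Real.sqrt_one] at this
  have hpi := Real.pi_pos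
  have harg : 0 < B / Real.sqrt (2 * B + 1) := div_pos hB hs
  have hat : 0 < Real.arctan (B / Real.sqrt (2 * B + 1)) := by simpa using Real.arctan_strictMono harg
  have h1 : 0 < B / (3 * (B + 1) * Real.sqrt (2 * B + 1)) :=
    div_pos hB (by positivity)
  constructor
  · unfold g
    have : 0 < 1 / (2 * π) := by positivity
    positivity
  · unfold g
    have hat2 : Real.arctan (B / Real.sqrt (2 * B + 1)) < π / 2 := Real.arctan_lt_pi_div_two _
    have h2 : B / (3 * (B + 1) * Real.sqrt (2 * B + 1)) < 1 / 3 := by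
      rw [div_lt_div_iff₀ (by positivity) (by norm_num)]
      have : B ≤ (B + 1) * Real.sqrt (2 * B + 1) := by
        nlinarith [mul_le_mul_of_nonneg_left hs1 (le_of_lt (show (0:ℝ) < B + 1 by linarith))]
      nlinarith
    have hpig : (1:ℝ) < π := by nlinarith [Real.pi_gt_three]
    rw [show (1:ℝ)/3 = (1 / (2 * π)) * (2 * π / 3) by field_simp]
    apply mul_lt_mul_of_pos_left _ (by positivity)
    nlinarith
end

section
/- Under the far-field model with M = √N antennas per row and fixed element size √A, the normalized interference gain I(M) = (A cos θ₂/(4πd₂²))·|sin(πM√AΩ/λ)/sin(π√AΩ/λ)|² is bounded by C = (A cos θ₂/(4πd₂²))/sin²(π√AΩ/λ) uniformly in M (assuming √AΩ/λ ∉ ℤ), while the signal gain ‖h₁‖² = M²A cos θ₁/(4πd₁²) grows like M². Consequently, the MR SINR loss α^MR = x/(1+x) with x = SNR₂·I(M)/1 satisfies limsup_{M→∞} α^MR ≤ SNR₂C/(1+SNR₂C) < 1, so γ^MR/ (SNR₁‖h₁‖²) stays bounded below by a positive constant. -/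
open Real Filter

/-! Since `sin² ≤ 1`, the array factor `(sin (π M a) / sin (π a))²` is bounded by `1 / sin² (π a)`
uniformly in `M`. The loss `x ↦ x / (1 + x)` is increasing on `[0, ∞)` and `1 - x / (1 + x) = 1 / (1 + x)`,
so the bound on the interference carries over to the loss, with the gap `1 / (1 + SNR₂ C)` to `1`. -/

/-- The MR SINR loss `α = x / (1 + x)` caused by an interference-to-noise ratio `x`. -/
noncomputable def mrLoss (x : ℝ) : ℝ := x / (1 + x)

section mrLoss

variable {x y : ℝ}

lemma mrLoss_nonneg (hx : 0 ≤ x) : 0 ≤ mrLoss x := by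
  unfold mrLoss; positivity

lemma one_sub_mrLoss (hx : 0 ≤ x) : 1 - mrLoss x = 1 / (1 + x) := by
  unfold mrLoss; field_simp; ring

lemma mrLoss_lt_one (hx : 0 ≤ x) : mrLoss x < 1 := by
  have : 0 < 1 / (1 + x) := by positivity
  linarith [one_sub_mrLoss hx]

lemma mrLoss_le_mrLoss (hx : 0 ≤ x) (hxy : x ≤ y) : mrLoss x ≤ mrLoss y := by
  have : 1 / (1 + y) ≤ 1 / (1 + x) := one_div_le_one_div_of_le (by positivity) (by linarith)
  linarith [one_sub_mrLoss hx, one_sub_mrLoss (hx.trans hxy)]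

end mrLoss

lemma mul_sin_div_sq_le {K : ℝ} (hK : 0 ≤ K) (x y : ℝ) : K * (sin x / y) ^ 2 ≤ K / y ^ 2 := by
  rw [div_pow, mul_div_assoc']
  gcongr
  exact mul_le_of_le_one_right hK (sin_sq_le_one x)

theorem farfield_mr_loss_bounded_general
    (A lam d₂ θ₁ θ₂ SNR₂ : ℝ) (hA : 0 < A)
    (hc₂ : 0 ≤ Real.cos θ₂) (hS₂ : 0 < SNR₂) :
    let Ω : ℝ := Real.sin θ₂ - Real.sin θ₁
    let I : ℕ → ℝ := fun M => (A * Real.cos θ₂ / (4 * π * d₂ ^ 2)) *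
      (Real.sin (π * (M : ℝ) * Real.sqrt A * Ω / lam) /
        Real.sin (π * Real.sqrt A * Ω / lam)) ^ 2
    let C : ℝ := (A * Real.cos θ₂ / (4 * π * d₂ ^ 2)) /
      Real.sin (π * Real.sqrt A * Ω / lam) ^ 2
    let α : ℕ → ℝ := fun M => (SNR₂ * I M) / (1 + SNR₂ * I M)
    (∀ M : ℕ, I M ≤ C) ∧
    Filter.limsup α Filter.atTop ≤ SNR₂ * C / (1 + SNR₂ * C) ∧
    SNR₂ * C / (1 + SNR₂ * C) < 1 ∧
    ∃ c : ℝ, 0 < c ∧ ∀ M : ℕ, c ≤ 1 - α M := by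
  intro Ω I C α
  have hK : 0 ≤ A * cos θ₂ / (4 * π * d₂ ^ 2) := by positivity
  have hIC : ∀ M, I M ≤ C := fun M => mul_sin_div_sq_le hK _ _
  have hI : ∀ M, 0 ≤ SNR₂ * I M := fun M => by positivity
  have hC : 0 ≤ SNR₂ * C := (hI 0).trans (by gcongr; exact hIC 0)
  have hαC : ∀ M, α M ≤ mrLoss (SNR₂ * C) := fun M =>
    mrLoss_le_mrLoss (hI M) (by gcongr; exact hIC M)
  refine ⟨hIC, limsup_le_of_le (isCoboundedUnder_le_of_le atTop fun M => mrLoss_nonneg (hI M))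
    (.of_forall hαC), mrLoss_lt_one hC, 1 / (1 + SNR₂ * C), by positivity, fun M => ?_⟩
  linarith [one_sub_mrLoss hC, hαC M]

theorem farfield_mr_loss_bounded
    (A lam d₂ θ₁ θ₂ SNR₂ : ℝ) (hA : 0 < A) (hlam : 0 < lam) (hd₂ : 0 < d₂)
    (hc₂ : 0 ≤ Real.cos θ₂) (hS₂ : 0 < SNR₂)
    (hnotint : ¬∃ k : ℤ, Real.sqrt A * (Real.sin θ₂ - Real.sin θ₁) / lam = (k : ℝ)) :
    let Ω : ℝ := Real.sin θ₂ - Real.sin θ₁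
    let I : ℕ → ℝ := fun M => (A * Real.cos θ₂ / (4 * π * d₂ ^ 2)) *
      (Real.sin (π * (M : ℝ) * Real.sqrt A * Ω / lam) /
        Real.sin (π * Real.sqrt A * Ω / lam)) ^ 2
    let C : ℝ := (A * Real.cos θ₂ / (4 * π * d₂ ^ 2)) /
      Real.sin (π * Real.sqrt A * Ω / lam) ^ 2
    let α : ℕ → ℝ := fun M => (SNR₂ * I M) / (1 + SNR₂ * I M)
    (∀ M : ℕ, I M ≤ C) ∧
    Filter.limsup α Filter.atTop ≤ SNR₂ * C / (1 + SNR₂ * C) ∧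
    SNR₂ * C / (1 + SNR₂ * C) < 1 ∧
    ∃ c : ℝ, 0 < c ∧ ∀ M : ℕ, c ≤ 1 - α M :=
  farfield_mr_loss_bounded_general A lam d₂ θ₁ θ₂ SNR₂ hA hc₂ hS₂
end
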